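/- Let g : ℝ → ℝ be 6-times continuously differentiable with |g^{(6)}(x)| ≤ M for all x ∈ ℝ, and suppose x ↦ g(x)e^{−x²} is integrable on ℝ. Then |∫_ℝ g(x) e^{−x²} dx − ((√π/6)·g(−√(3/2)) + (2√π/3)·g(0) + (√π/6)·g(√(3/2)))| ≤ (√π/960)·M. -/

import Mathlib

/-!
Let `p` be the Hermite interpolant of `g` at the nodes `0, ±√(3/2)` (degree `< 6`, matching `g`
and `g'` there) and `w x = x²(x² - 3/2)²`. For `x` off the nodes choose `c` so that `g - p - c·w`
vanishes at `x`; with its double zeros at the nodes it has seven zeros counted with multiplicity,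
so by Rolle its sixth derivative `g⁽⁶⁾ - 720 c` vanishes somewhere, whence
`|g x - p x| ≤ M / 720 · w x`. The rule integrates polynomials of degree `< 6` exactly against
`exp (-x²)`, so the quadrature error is `∫ (g - p) exp (-x²)`, which is at most
`M / 720 · ∫ w exp (-x²) = √π M / 960`.
-/

open Real Polynomial MeasureTheory Finset Lagrange

theorem exists_finset_deriv_eq_zero {f : ℝ → ℝ} (hf : Differentiable ℝ f) (S : Finset ℝ)
    (hS : ∀ x ∈ S, f x = 0) :
    ∃ T : Finset ℝ, #S ≤ #T + 1 ∧ Disjoint S T ∧ ∀ x ∈ T, deriv f x = 0 := by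
  -- the extra clause keeps each new Rolle point, which lies above `S`, out of `T`
  suffices ∃ T : Finset ℝ, #S ≤ #T + 1 ∧ Disjoint S T ∧ (∀ y ∈ T, ∃ x ∈ S, y < x) ∧
      ∀ x ∈ T, deriv f x = 0 by
    obtain ⟨T, hcard, hdisj, -, hT⟩ := this
    exact ⟨T, hcard, hdisj, hT⟩
  induction S using Finset.induction_on_max with
  | empty => exact ⟨∅, by simp⟩
  | insert a s hlt ih =>
    obtain ⟨T, hcard, hdisj, hbelow, hT⟩ := ih fun x hx => hS x (mem_insert_of_mem hx)
    rcases s.eq_empty_or_nonempty with rfl | hne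
    · exact ⟨∅, by simp⟩
    have hb := s.max'_mem hne
    obtain ⟨c, ⟨hbc, hca⟩, hc⟩ := exists_deriv_eq_zero (hlt _ hb) hf.continuous.continuousOn
      ((hS _ (mem_insert_of_mem hb)).trans (hS a (mem_insert_self a s)).symm)
    have hs_lt_c : ∀ x ∈ s, x < c := fun x hx => (s.le_max' x hx).trans_lt hbc
    have hcT : c ∉ T := fun h => by
      obtain ⟨x, hx, hcx⟩ := hbelow c h
      exact (hs_lt_c x hx).not_gt hcx
    have haT : a ∉ T := fun h => by
      obtain ⟨x, hx, hax⟩ := hbelow a h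
      exact (hlt x hx).not_gt hax
    have has : a ∉ s := fun h => (hlt a h).false
    refine ⟨insert c T, ?_, ?_, ?_, ?_⟩
    · rw [card_insert_of_notMem has, card_insert_of_notMem hcT]
      omega
    · simp only [disjoint_insert_left, disjoint_insert_right, mem_insert, not_or]
      exact ⟨⟨hca.ne, fun h => (hs_lt_c c h).false⟩, haT, hdisj⟩
    · simp only [mem_insert, forall_eq_or_imp, exists_eq_or_imp]
      exact ⟨Or.inl hca, fun y hy => Or.inr (hbelow y hy)⟩
    · simpa using ⟨hc, hT⟩

theorem exists_iteratedDeriv_eq_zero {n : ℕ} {f : ℝ → ℝ} (hf : ContDiff ℝ n f) (S : Finset ℝ)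
    (hS : ∀ x ∈ S, f x = 0) (hcard : n < #S) : ∃ ξ, iteratedDeriv n f ξ = 0 := by
  induction n generalizing f S with
  | zero =>
    obtain ⟨x, hx⟩ := card_pos.mp hcard
    exact ⟨x, by simpa using hS x hx⟩
  | succ n ih =>
    have hf : ContDiff ℝ ((n : WithTop ℕ∞) + 1) f := by exact_mod_cast hf
    obtain ⟨hdiff, -, hderiv⟩ := contDiff_succ_iff_deriv.mp hf
    obtain ⟨T, hST, -, hT⟩ := exists_finset_deriv_eq_zero hdiff S hS
    rw [iteratedDeriv_succ']
    exact ih hderiv T hT (by omega)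

theorem exists_iteratedDeriv_eq_zero_of_hermite_zeros {f : ℝ → ℝ} {N : Finset ℝ}
    (hf : ContDiff ℝ (2 * #N : ℕ) f) (hzero : ∀ a ∈ N, f a = 0 ∧ deriv f a = 0) {x : ℝ}
    (hx : x ∉ N) (hfx : f x = 0) : ∃ ξ, iteratedDeriv (2 * #N) f ξ = 0 := by
  rcases N.eq_empty_or_nonempty with rfl | hN
  · exact ⟨x, by simpa using hfx⟩
  obtain ⟨k, hk⟩ : ∃ k, 2 * #N = k + 1 := ⟨2 * #N - 1, by have := hN.card_pos; omega⟩
  have hf : ContDiff ℝ ((k : WithTop ℕ∞) + 1) f := by rw [hk] at hf; exact_mod_cast hf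
  obtain ⟨hdiff, -, hderiv⟩ := contDiff_succ_iff_deriv.mp hf
  obtain ⟨T, hcard, hdisj, hT⟩ := exists_finset_deriv_eq_zero hdiff (insert x N)
    (by simpa [hfx] using fun a ha => (hzero a ha).1)
  rw [card_insert_of_notMem hx] at hcard
  rw [hk, iteratedDeriv_succ']
  refine exists_iteratedDeriv_eq_zero hderiv (T ∪ N) ?_ ?_
  · simp only [mem_union]
    rintro a (ha | ha)
    exacts [hT a ha, (hzero a ha).2]
  · rw [card_union_of_disjoint (disjoint_of_subset_left (subset_insert x N) hdisj).symm]
    omega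

theorem Polynomial.iteratedDeriv_eval {𝕜 : Type*} [NontriviallyNormedField 𝕜] (p : 𝕜[X])
    (k : ℕ) :
    iteratedDeriv k (fun x => p.eval x) = fun x => (derivative^[k] p).eval x := by
  induction k generalizing p with
  | zero => simp
  | succ k ih =>
    have hderiv : deriv (fun x => p.eval x) = fun x => p.derivative.eval x := by
      funext x
      exact p.deriv
    rw [iteratedDeriv_succ', hderiv, ih, Function.iterate_succ_apply]

theorem Polynomial.Monic.iterate_derivative_natDegree {R : Type*} [CommSemiring R] {p : R[X]}
    (hp : p.Monic) : derivative^[p.natDegree] p = C (p.natDegree.factorial : R) := by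
  rw [eq_C_of_natDegree_le_zero (p := derivative^[p.natDegree] p)
    ((natDegree_iterate_derivative _ _).trans (by simp)), coeff_iterate_derivative]
  simp [hp.coeff_natDegree, Nat.descFactorial_self]

theorem Polynomial.eq_zero_of_degree_lt_of_isRoot_derivative {R : Type*} [CommRing R]
    [IsDomain R] [CharZero R] {p : R[X]} {N : Finset R} (hdeg : p.degree < ↑(2 * #N))
    (hroot : ∀ a ∈ N, p.IsRoot a ∧ p.derivative.IsRoot a) : p = 0 := by
  classical
  by_contra hp
  have hle : 2 • N.val ≤ p.roots := Multiset.le_iff_count.mpr fun a => by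
    rw [count_roots, Multiset.count_nsmul]
    by_cases ha : a ∈ N
    · rw [Multiset.count_eq_one_of_mem N.nodup ha]
      exact (one_lt_rootMultiplicity_iff_isRoot hp).mpr (hroot a ha)
    · simp [Multiset.count_eq_zero.mpr ha]
  have hcard := (Multiset.card_le_card hle).trans (card_roots' p)
  rw [Multiset.card_nsmul, card_val] at hcard
  have := (natDegree_lt_iff_degree_lt hp).mpr hdeg
  omega

/-- Existence follows from uniqueness: the data map is an injective linear map between spaces of
the same dimension `2 * #N`. -/
theorem exists_hermite_interpolant {K : Type*} [Field K] [CharZero K] (N : Finset K)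
    (v d : K → K) :
    ∃ p : K[X], p.degree < ↑(2 * #N) ∧ ∀ a ∈ N, p.eval a = v a ∧ p.derivative.eval a = d a := by
  let L : degreeLT K (2 * #N) →ₗ[K] (N → K) × (N → K) :=
    (LinearMap.pi fun a : N => leval a.1).prod (LinearMap.pi fun a : N => leval a.1 ∘ₗ derivative)
      ∘ₗ (degreeLT K _).subtype
  have hL (q : degreeLT K (2 * #N)) (a : N) :
      (L q).1 a = (q : K[X]).eval a.1 ∧ (L q).2 a = (q : K[X]).derivative.eval a.1 :=
    ⟨rfl, rfl⟩
  have hinj : Function.Injective L := by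
    refine (injective_iff_map_eq_zero L).mpr fun q hq => Subtype.ext ?_
    refine eq_zero_of_degree_lt_of_isRoot_derivative (mem_degreeLT.mp q.2) fun a ha => ?_
    rw [IsRoot, IsRoot, ← (hL q ⟨a, ha⟩).1, ← (hL q ⟨a, ha⟩).2, hq]
    exact ⟨rfl, rfl⟩
  have hrank : Module.finrank K (degreeLT K (2 * #N)) =
      Module.finrank K ((N → K) × (N → K)) := by
    rw [(degreeLTEquiv K _).finrank_eq]
    simp only [Module.finrank_fintype_fun_eq_card, Fintype.card_fin, Module.finrank_prod,
      Fintype.card_coe]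
    ring
  obtain ⟨q, hq⟩ := (LinearMap.injective_iff_surjective_of_finrank_eq_finrank hrank).mp hinj
    (fun a => v a, fun a => d a)
  refine ⟨q, mem_degreeLT.mp q.2, fun a ha => ?_⟩
  rw [← (hL q ⟨a, ha⟩).1, ← (hL q ⟨a, ha⟩).2, hq]
  exact ⟨rfl, rfl⟩

theorem exists_hermite_interpolation_error {g : ℝ → ℝ} {N : Finset ℝ}
    (hg : ContDiff ℝ (2 * #N : ℕ) g) {p : ℝ[X]} (hp : p.degree < ↑(2 * #N))
    (hp_eq : ∀ a ∈ N, p.eval a = g a ∧ p.derivative.eval a = deriv g a) (x : ℝ) :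
    ∃ ξ, g x - p.eval x =
      iteratedDeriv (2 * #N) g ξ / (2 * #N).factorial * ∏ a ∈ N, (x - a) ^ 2 := by
  set w := nodal N id ^ 2
  have hw_eval : ∀ t, w.eval t = ∏ a ∈ N, (t - a) ^ 2 := by simp [w, eval_nodal, prod_pow]
  have hw_root : ∀ a ∈ N, w.eval a = 0 ∧ w.derivative.eval a = 0 := fun a ha => by
    have := eval_nodal_at_node (v := id) ha
    simp_all [w, derivative_pow]
  have hw_deg : w.natDegree = 2 * #N := by simp [w, natDegree_nodal]
  by_cases hx : x ∈ N
  · refine ⟨x, ?_⟩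
    rw [(hp_eq x hx).1, sub_self, ← hw_eval, (hw_root x hx).1, mul_zero]
  have hwx : w.eval x ≠ 0 := by
    rw [hw_eval]
    exact prod_ne_zero_iff.mpr fun a ha =>
      pow_ne_zero 2 (sub_ne_zero.mpr (ne_of_mem_of_not_mem ha hx).symm)
  -- `q` interpolates `g` doubly at the nodes and simply at `x`
  set c := (g x - p.eval x) / w.eval x
  set q := p + C c * w
  have hq : ContDiff ℝ (2 * #N : ℕ) (fun t => q.eval t) := by
    simpa using q.contDiff_aeval (𝕜 := ℝ) _
  have hφ_zero : ∀ a ∈ N,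
      (g - fun t => q.eval t) a = 0 ∧ deriv (g - fun t => q.eval t) a = 0 := by
    intro a ha
    have hg1 : Differentiable ℝ g :=
      hg.differentiable (by simp [nonempty_iff_ne_empty.mp ⟨a, ha⟩])
    refine ⟨by simp [q, (hp_eq a ha).1, (hw_root a ha).1], ?_⟩
    rw [deriv_sub hg1.differentiableAt q.differentiableAt, Polynomial.deriv]
    simp [q, (hp_eq a ha).2, (hw_root a ha).2]
  have hφx : (g - fun t => q.eval t) x = 0 := by simp [q, c, hwx]
  have hφ : ContDiff ℝ (2 * #N : ℕ) (g - fun t => q.eval t) := hg.sub hq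
  obtain ⟨ξ, hξ⟩ := exists_iteratedDeriv_eq_zero_of_hermite_zeros hφ hφ_zero hx hφx
  refine ⟨ξ, ?_⟩
  have hφ_deriv : iteratedDeriv (2 * #N) (g - fun t => q.eval t) ξ =
      iteratedDeriv (2 * #N) g ξ - c * (2 * #N).factorial := by
    rw [iteratedDeriv_sub hg.contDiffAt hq.contDiffAt, q.iteratedDeriv_eval, iterate_map_add,
      iterate_derivative_eq_zero_of_degree_lt hp, iterate_derivative_C_mul, ← hw_deg,
      (nodal_monic.pow 2).iterate_derivative_natDegree]
    simp [hw_deg]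
  rw [hφ_deriv, sub_eq_zero] at hξ
  rw [← hw_eval, hξ, mul_div_cancel_right₀ _ (by positivity)]
  exact (div_mul_cancel₀ _ hwx).symm

theorem abs_sub_eval_le_of_hermite {g : ℝ → ℝ} {N : Finset ℝ} {M : ℝ}
    (hg : ContDiff ℝ (2 * #N : ℕ) g) (hM : ∀ x, |iteratedDeriv (2 * #N) g x| ≤ M) {p : ℝ[X]}
    (hp : p.degree < ↑(2 * #N))
    (hp_eq : ∀ a ∈ N, p.eval a = g a ∧ p.derivative.eval a = deriv g a) (x : ℝ) :
    |g x - p.eval x| ≤ M / (2 * #N).factorial * ∏ a ∈ N, (x - a) ^ 2 := by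
  obtain ⟨ξ, hξ⟩ := exists_hermite_interpolation_error hg hp hp_eq x
  rw [hξ, abs_mul, abs_div, abs_of_nonneg (by positivity : (0 : ℝ) ≤ ∏ a ∈ N, (x - a) ^ 2),
    Nat.abs_cast]
  gcongr
  exact hM ξ

theorem integrable_pow_mul_exp_neg_sq (n : ℕ) :
    Integrable fun x : ℝ => x ^ n * exp (-x ^ 2) := by
  simpa using integrable_rpow_mul_exp_neg_mul_sq one_pos
    (by linarith [n.cast_nonneg (α := ℝ)] : (-1 : ℝ) < n)

theorem Polynomial.integrable_eval_mul_exp_neg_sq (p : ℝ[X]) :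
    Integrable fun x => p.eval x * exp (-x ^ 2) := by
  simp_rw [eval_eq_sum_range, sum_mul, mul_assoc]
  exact integrable_finsetSum _ fun i _ => (integrable_pow_mul_exp_neg_sq i).const_mul _

theorem integral_eq_zero_of_odd {E : Type*} [NormedAddCommGroup E] [NormedSpace ℝ E]
    {f : ℝ → E} (hf : ∀ x, f (-x) = -f x) : ∫ x, f x = 0 := by
  have h := integral_neg_eq_self f volume
  simp_rw [hf, integral_neg] at h
  have h2 : (2 : ℝ) • ∫ x, f x = 0 := by
    rw [two_smul]
    nth_rewrite 1 [← h]
    exact neg_add_cancel _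
  exact (smul_eq_zero.mp h2).resolve_left two_ne_zero

theorem integral_pow_mul_exp_neg_sq_of_odd {n : ℕ} (hn : Odd n) :
    ∫ x : ℝ, x ^ n * exp (-x ^ 2) = 0 :=
  integral_eq_zero_of_odd fun x => by simp [hn.neg_pow]

theorem integral_pow_add_two_mul_exp_neg_sq (n : ℕ) :
    ∫ x : ℝ, x ^ (n + 2) * exp (-x ^ 2) = (n + 1) / 2 * ∫ x : ℝ, x ^ n * exp (-x ^ 2) := by
  have hderiv : ∀ x : ℝ, HasDerivAt (fun x => x ^ (n + 1) * exp (-x ^ 2))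
      ((n + 1) * (x ^ n * exp (-x ^ 2)) - 2 * (x ^ (n + 2) * exp (-x ^ 2))) x := fun x => by
    refine ((hasDerivAt_pow (n + 1) x).fun_mul (hasDerivAt_pow 2 x).fun_neg.exp).congr_deriv ?_
    simp only [Nat.add_sub_cancel, Nat.cast_add, Nat.cast_one, Nat.cast_ofNat]
    ring
  have hint := (integrable_pow_mul_exp_neg_sq n).const_mul (n + 1 : ℝ)
  have hint' := (integrable_pow_mul_exp_neg_sq (n + 2)).const_mul 2
  have h := integral_eq_zero_of_hasDerivAt_of_integrable hderiv (hint.sub hint')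
    (integrable_pow_mul_exp_neg_sq (n + 1))
  rw [integral_sub hint hint', integral_const_mul, integral_const_mul] at h
  linarith

theorem integral_exp_neg_sq : ∫ x : ℝ, exp (-x ^ 2) = √π := by
  simpa using integral_gaussian 1

theorem integral_pow_two_mul_exp_neg_sq : ∫ x : ℝ, x ^ 2 * exp (-x ^ 2) = √π / 2 := by
  rw [integral_pow_add_two_mul_exp_neg_sq 0]
  simp only [pow_zero, one_mul, integral_exp_neg_sq, Nat.cast_zero]
  ring

theorem integral_pow_four_mul_exp_neg_sq : ∫ x : ℝ, x ^ 4 * exp (-x ^ 2) = 3 * √π / 4 := by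
  rw [integral_pow_add_two_mul_exp_neg_sq 2, integral_pow_two_mul_exp_neg_sq]
  push_cast
  ring

theorem integral_pow_six_mul_exp_neg_sq : ∫ x : ℝ, x ^ 6 * exp (-x ^ 2) = 15 * √π / 8 := by
  rw [integral_pow_add_two_mul_exp_neg_sq 4, integral_pow_four_mul_exp_neg_sq]
  push_cast
  ring

noncomputable def gaussHermite3 (f : ℝ → ℝ) : ℝ :=
  √π / 6 * f (-√(3 / 2)) + 2 * √π / 3 * f 0 + √π / 6 * f (√(3 / 2))

theorem integral_pow_mul_exp_neg_sq_eq_gaussHermite3 {k : ℕ} (hk : k < 6) :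
    ∫ x : ℝ, x ^ k * exp (-x ^ 2) = gaussHermite3 (· ^ k) := by
  unfold gaussHermite3
  have hs : √(3 / 2 : ℝ) ^ 2 = 3 / 2 := sq_sqrt (by norm_num)
  generalize √(3 / 2 : ℝ) = s at hs ⊢
  interval_cases k
  · simp only [pow_zero, one_mul, integral_exp_neg_sq]
    ring
  · rw [integral_pow_mul_exp_neg_sq_of_odd (by decide)]
    ring
  · rw [integral_pow_two_mul_exp_neg_sq]
    linear_combination (-√π / 3) * hs
  · rw [integral_pow_mul_exp_neg_sq_of_odd (by decide)]
    ring
  · rw [integral_pow_four_mul_exp_neg_sq]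
    linear_combination (-√π / 3 * (s ^ 2 + 3 / 2)) * hs
  · rw [integral_pow_mul_exp_neg_sq_of_odd (by decide)]
    ring

theorem integral_eval_mul_exp_neg_sq_eq_gaussHermite3 {p : ℝ[X]} (hp : p.degree < 6) :
    ∫ x, p.eval x * exp (-x ^ 2) = gaussHermite3 fun x => p.eval x := by
  have hp : p.natDegree < 6 := by
    rcases eq_or_ne p 0 with rfl | h
    · simp
    · exact (natDegree_lt_iff_degree_lt h).mpr hp
  simp_rw [eval_eq_sum_range' hp, sum_mul, mul_assoc]
  rw [integral_finsetSum _ fun i _ => (integrable_pow_mul_exp_neg_sq i).const_mul _]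
  simp_rw [integral_const_mul]
  rw [sum_congr rfl fun i hi => by
    rw [integral_pow_mul_exp_neg_sq_eq_gaussHermite3 (mem_range.mp hi)]]
  simp only [gaussHermite3, mul_sum, ← sum_add_distrib]
  exact sum_congr rfl fun i _ => by ring

theorem integral_sq_mul_sq_sub_sq_mul_exp_neg_sq :
    ∫ x : ℝ, x ^ 2 * (x ^ 2 - 3 / 2) ^ 2 * exp (-x ^ 2) = 3 * √π / 4 := by
  have h6 := integrable_pow_mul_exp_neg_sq 6
  have h4 := (integrable_pow_mul_exp_neg_sq 4).const_mul 3
  have h2 := (integrable_pow_mul_exp_neg_sq 2).const_mul (9 / 4)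
  have hexpand : (fun x : ℝ => x ^ 2 * (x ^ 2 - 3 / 2) ^ 2 * exp (-x ^ 2)) = fun x =>
      x ^ 6 * exp (-x ^ 2) - 3 * (x ^ 4 * exp (-x ^ 2)) + 9 / 4 * (x ^ 2 * exp (-x ^ 2)) := by
    ext x
    ring
  rw [hexpand, integral_add (by exact h6.sub h4) h2, integral_sub h6 h4, integral_const_mul,
    integral_const_mul, integral_pow_six_mul_exp_neg_sq, integral_pow_four_mul_exp_neg_sq,
    integral_pow_two_mul_exp_neg_sq]
  ring

theorem abs_integral_sub_gaussHermite3_le {g : ℝ → ℝ} {M : ℝ}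
    (hint : Integrable fun x => g x * exp (-x ^ 2)) {p : ℝ[X]} (hp : p.degree < 6)
    (hp_eq : ∀ a ∈ ({-√(3 / 2), 0, √(3 / 2)} : Finset ℝ), p.eval a = g a)
    (hbound : ∀ x, |g x - p.eval x| ≤ M / 720 * (x ^ 2 * (x ^ 2 - 3 / 2) ^ 2)) :
    |(∫ x, g x * exp (-x ^ 2)) - gaussHermite3 g| ≤ √π / 960 * M := by
  have hquad : gaussHermite3 g = ∫ x, p.eval x * exp (-x ^ 2) := by
    rw [integral_eval_mul_exp_neg_sq_eq_gaussHermite3 hp]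
    simp [gaussHermite3, hp_eq]
  have hweight : Integrable fun x : ℝ => x ^ 2 * (x ^ 2 - 3 / 2) ^ 2 * exp (-x ^ 2) := by
    have := (X ^ 2 * (X ^ 2 - C (3 / 2 : ℝ)) ^ 2).integrable_eval_mul_exp_neg_sq
    simp only [eval_mul, eval_pow, eval_X, eval_sub, eval_C] at this
    exact this
  calc |(∫ x, g x * exp (-x ^ 2)) - gaussHermite3 g|
      = ‖∫ x, (g x - p.eval x) * exp (-x ^ 2)‖ := by
        rw [hquad, ← integral_sub hint p.integrable_eval_mul_exp_neg_sq, Real.norm_eq_abs]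
        simp_rw [sub_mul]
    _ ≤ ∫ x, M / 720 * (x ^ 2 * (x ^ 2 - 3 / 2) ^ 2 * exp (-x ^ 2)) := by
        refine norm_integral_le_of_norm_le (hweight.const_mul _) (ae_of_all _ fun x => ?_)
        rw [norm_mul, Real.norm_eq_abs, Real.norm_of_nonneg (exp_pos _).le, ← mul_assoc]
        exact mul_le_mul_of_nonneg_right (hbound x) (exp_pos _).le
    _ = √π / 960 * M := by
        rw [integral_const_mul, integral_sq_mul_sq_sub_sq_mul_exp_neg_sq]
        ring

theorem gauss_hermite_three_point_error (g : ℝ → ℝ) (M : ℝ)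
    (hg : ContDiff ℝ 6 g) (hM : ∀ x : ℝ, |iteratedDeriv 6 g x| ≤ M)
    (hint : MeasureTheory.Integrable (fun x : ℝ => g x * Real.exp (-(x ^ 2)))) :
    |(∫ x : ℝ, g x * Real.exp (-(x ^ 2)))
        - (Real.sqrt Real.pi / 6 * g (-Real.sqrt (3 / 2))
          + 2 * Real.sqrt Real.pi / 3 * g 0
          + Real.sqrt Real.pi / 6 * g (Real.sqrt (3 / 2)))|
      ≤ Real.sqrt Real.pi / 960 * M := by
  set s := √(3 / 2 : ℝ)
  have hs : s ^ 2 = 3 / 2 := sq_sqrt (by norm_num)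
  have hs0 : 0 < s := sqrt_pos.mpr (by norm_num)
  set N : Finset ℝ := {-s, 0, s}
  have hN : 2 * #N = 6 := by
    rw [card_eq_three.mpr ⟨-s, 0, s, by linarith, by linarith, hs0.ne, rfl⟩]
  have hprod (x : ℝ) : ∏ a ∈ N, (x - a) ^ 2 = x ^ 2 * (x ^ 2 - 3 / 2) ^ 2 := by
    rw [prod_insert (by simp only [mem_insert, mem_singleton]; rintro (h | h) <;> linarith),
      prod_insert (by simpa using hs0.ne), prod_singleton, ← hs]
    ring
  obtain ⟨p, hp, hp_eq⟩ := exists_hermite_interpolant N g (deriv g)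
  have hbound (x : ℝ) := abs_sub_eval_le_of_hermite (hN ▸ hg) (hN ▸ hM) hp hp_eq x
  simp only [hN, hprod] at hbound hp
  exact abs_integral_sub_gaussHermite3_le hint hp (fun a ha => (hp_eq a ha).1) hbound
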